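/- Let α ∈ (1/2,1), T > 0, x₀ ∈ ℝ^d, and let b : ℝ^d → ℝ^d be globally Lipschitz and continuously differentiable with derivative of at most polynomial growth. Suppose x : [0,T] → ℝ^d is continuous and satisfies the deterministic Volterra equation x(t) = x₀ + ∫_0^t K(t−s) b(x(s)) ds for all t ∈ [0,T]. Then the function t ↦ x(t) has bounded variation on [0,T]. -/

import Mathlib

open MeasureTheory intervalIntegral Real Set

/-!
Put `f = b ∘ x`, so that `x = x₀ + I^α f` with `I^α f (t) = ∫₀ᵗ K(t - u) f(u) du`. As `f` is bounded
on `[0, T]`, `I^α f` and hence `x` is `α`-Hölder, and then so is `f` because `b` is Lipschitz.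
Splitting `f = f s + (f - f s)`, the constant part moves `I^α f` by a multiple of `t^α - s^α`,
while `|K(t - u) - K(s - u)| ≤ (1 - α)(t - s)(s - u)^(α - 2) / Γ(α)` paired with
`‖f u - f s‖ ≲ (s - u)^α` is integrable since `2α - 2 > -1`, giving a term `O(t - s)`.
So `‖x t - x s‖ ≤ φ t - φ s` with `φ t = A t^α + B t` monotone, and `x` inherits the bounded
variation of `φ`.
-/

/-- Fractional kernel `K(u) = u^(α-1)/Γ(α)` for `u > 0`, `0` otherwise. -/
noncomputable def Kker (α u : ℝ) : ℝ := if 0 < u then u ^ (α - 1) / Real.Gamma α else 0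

/-- First-order resolvent kernel `L(u) = u^(-α)/Γ(1-α)` for `u > 0`, `0` otherwise. -/
noncomputable def Lker (α u : ℝ) : ℝ := if 0 < u then u ^ (-α) / Real.Gamma (1 - α) else 0

/-- Discretization map `φ_h(t) = h⌊t/h⌋`. -/
noncomputable def phi (h t : ℝ) : ℝ := h * (⌊t / h⌋ : ℝ)

/-- `χ_h(u) = u - φ_h(u)`. -/
noncomputable def chi (h u : ℝ) : ℝ := u - phi h u

/-- Discretized kernel `K^{(h)}`. -/
noncomputable def Kh (α h t s : ℝ) : ℝ :=
  if 0 ≤ s ∧ s < phi h t then Kker α (phi h t - s) else 0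

/-- The kernel `g^{(h)}(t,s) = ∫_s^t L(t-v) K^{(h)}(v,s) dv`. -/
noncomputable def gh (α h t s : ℝ) : ℝ := ∫ v in s..t, Lker α (t - v) * Kh α h v s


section Kernel

variable {α : ℝ}

lemma Kker_nonneg (hα : 0 < α) (u : ℝ) : 0 ≤ Kker α u := by
  unfold Kker
  split_ifs with hu
  · exact div_nonneg (rpow_nonneg hu.le _) (Gamma_pos_of_pos hα).le
  · exact le_rfl

lemma Kker_of_pos {u : ℝ} (hu : 0 < u) : Kker α u = u ^ (α - 1) / Gamma α := if_pos hu

/-- At `u = 0` both sides vanish, since `0 ^ (α - 1) = 0` for `α ≠ 1`. -/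
lemma Kker_of_nonneg (hα : α ≠ 1) {u : ℝ} (hu : 0 ≤ u) : Kker α u = u ^ (α - 1) / Gamma α := by
  rcases hu.lt_or_eq with hu | rfl
  · exact Kker_of_pos hu
  · rw [Kker, if_neg (lt_irrefl 0), zero_rpow (sub_ne_zero.mpr hα), zero_div]

lemma Kker_antitoneOn (hα₀ : 0 < α) (hα₁ : α ≤ 1) : AntitoneOn (Kker α) (Ioi 0) := by
  intro u hu v hv huv
  rw [Kker_of_pos hu, Kker_of_pos hv]
  have hΓ := Gamma_pos_of_pos hα₀
  gcongr ?_ / _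
  exact rpow_le_rpow_of_nonpos hu huv (by linarith)

lemma abs_rpow_add_sub_rpow_le {r w Δ : ℝ} (hr : r ≤ 1) (hw : 0 < w) (hΔ : 0 ≤ Δ) :
    |(w + Δ) ^ r - w ^ r| ≤ |r| * w ^ (r - 1) * Δ := by
  have hderiv : ∀ z ∈ Icc w (w + Δ),
      HasDerivWithinAt (fun z => z ^ r) (r * z ^ (r - 1)) (Icc w (w + Δ)) z :=
    fun z hz => (hasDerivAt_rpow_const (Or.inl (hw.trans_le hz.1).ne')).hasDerivWithinAt
  have hbound : ∀ z ∈ Ico w (w + Δ), ‖r * z ^ (r - 1)‖ ≤ |r| * w ^ (r - 1) := by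
    intro z hz
    rw [Real.norm_eq_abs, abs_mul, abs_of_nonneg (rpow_nonneg (hw.le.trans hz.1) _)]
    exact mul_le_mul_of_nonneg_left (rpow_le_rpow_of_nonpos hw hz.1 (by linarith)) (abs_nonneg r)
  simpa using norm_image_sub_le_of_norm_deriv_le_segment' hderiv hbound (w + Δ)
    (right_mem_Icc.mpr (by linarith))

lemma abs_Kker_add_sub_Kker_le (hα₀ : 0 < α) (hα₁ : α ≤ 1) {w Δ : ℝ} (hw : 0 < w)
    (hΔ : 0 ≤ Δ) : |Kker α (w + Δ) - Kker α w| ≤ (1 - α) * Δ * w ^ (α - 2) / Gamma α := by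
  have hΓ := Gamma_pos_of_pos hα₀
  rw [Kker_of_pos (by linarith), Kker_of_pos hw, ← sub_div, abs_div, abs_of_pos hΓ]
  gcongr
  have h := abs_rpow_add_sub_rpow_le (r := α - 1) (by linarith) hw hΔ
  rw [abs_of_nonpos (by linarith : α - 1 ≤ 0), show α - 1 - 1 = α - 2 by ring] at h
  linarith

lemma intervalIntegrable_Kker_sub (hα₀ : 0 < α) (hα₁ : α ≠ 1) {a c e : ℝ} (hac : a ≤ c)
    (hce : c ≤ e) : IntervalIntegrable (fun u => Kker α (e - u)) volume a c := by
  have h : IntervalIntegrable (fun u => (e - u) ^ (α - 1) / Gamma α) volume a c := by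
    simpa using ((intervalIntegrable_rpow' (a := e - a) (b := e - c) (by linarith :
      -1 < α - 1)).comp_sub_left e).div_const (Gamma α)
  refine h.congr fun u hu => ?_
  rw [uIoc_of_le hac] at hu
  exact (Kker_of_nonneg hα₁ (by linarith [hu.2])).symm

lemma integral_Kker_sub (hα₀ : 0 < α) (hα₁ : α ≠ 1) {a c e : ℝ} (hac : a ≤ c) (hce : c ≤ e) :
    ∫ u in a..c, Kker α (e - u) = ((e - a) ^ α - (e - c) ^ α) / (α * Gamma α) := by
  rw [integral_congr (g := fun u => (e - u) ^ (α - 1) / Gamma α)]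
  · rw [intervalIntegral.integral_div, integral_comp_sub_left (fun v => v ^ (α - 1)) e,
      integral_rpow (Or.inl (by linarith)), sub_add_cancel, div_div]
  · intro u hu
    rw [uIcc_of_le hac] at hu
    exact Kker_of_nonneg hα₁ (by linarith [hu.2])

end Kernel

theorem eVariationOn_le_of_edist_le {α E F : Type*} [LinearOrder α] [PseudoEMetricSpace E]
    [PseudoEMetricSpace F] {f : α → E} {g : α → F} {s : Set α}
    (h : ∀ x ∈ s, ∀ y ∈ s, edist (f x) (f y) ≤ edist (g x) (g y)) :
    eVariationOn f s ≤ eVariationOn g s :=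
  iSup_le fun ⟨_, _, hu, us⟩ =>
    (Finset.sum_le_sum fun _ _ => h _ (us _) _ (us _)).trans (eVariationOn.sum_le hu us)

theorem boundedVariationOn_Icc_of_norm_sub_le {E : Type*} [SeminormedAddCommGroup E]
    {f : ℝ → E} {φ : ℝ → ℝ} {a b : ℝ}
    (h : ∀ s ∈ Icc a b, ∀ t ∈ Icc a b, s ≤ t → ‖f t - f s‖ ≤ φ t - φ s) :
    BoundedVariationOn f (Icc a b) := by
  rcases lt_or_ge b a with hba | hab
  · exact BoundedVariationOn.of_subsingleton (by simp [Icc_eq_empty_of_lt hba])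
  have hφ : MonotoneOn φ (Icc a b) := fun s hs t ht hst =>
    sub_nonneg.mp ((norm_nonneg _).trans (h s hs t ht hst))
  have hdom : ∀ s ∈ Icc a b, ∀ t ∈ Icc a b, edist (f s) (f t) ≤ edist (φ s) (φ t) := by
    intro s hs t ht
    wlog hst : s ≤ t generalizing s t
    · rw [edist_comm, edist_comm (φ s)]
      exact this t ht s hs (le_of_not_ge hst)
    rw [edist_comm, edist_comm (φ s), edist_dist, edist_dist, dist_eq_norm, Real.dist_eq,
      abs_of_nonneg (sub_nonneg.mpr (hφ hs ht hst))]
    exact ENNReal.ofReal_le_ofReal (h s hs t ht hst)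
  refine ne_top_of_le_ne_top ?_ (eVariationOn_le_of_edist_le hdom)
  have := hφ.eVariationOn_eq (left_mem_Icc.mpr hab) (right_mem_Icc.mpr hab)
  rw [inter_self] at this
  exact this ▸ ENNReal.ofReal_ne_top

section RiemannLiouville

variable {E : Type*} [NormedAddCommGroup E] [NormedSpace ℝ E] {α : ℝ}

noncomputable def riemannLiouville (α : ℝ) (f : ℝ → E) (t : ℝ) : E :=
  ∫ s in (0 : ℝ)..t, Kker α (t - s) • f s

lemma intervalIntegrable_Kker_sub_smul (hα₀ : 0 < α) (hα₁ : α ≠ 1) {f : ℝ → E} {a c e : ℝ}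
    (hac : a ≤ c) (hce : c ≤ e) (hf : ContinuousOn f (Icc a c)) :
    IntervalIntegrable (fun u => Kker α (e - u) • f u) volume a c :=
  (intervalIntegrable_Kker_sub hα₀ hα₁ hac hce).smul_continuousOn (by rwa [uIcc_of_le hac])

lemma riemannLiouville_sub_riemannLiouville (hα₀ : 0 < α) (hα₁ : α ≠ 1) {f : ℝ → E}
    {s t : ℝ} (hs : 0 ≤ s) (hst : s ≤ t) (hf : ContinuousOn f (Icc 0 t)) :
    riemannLiouville α f t - riemannLiouville α f s =
      (∫ u in (0 : ℝ)..s, (Kker α (t - u) - Kker α (s - u)) • f u) +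
        ∫ u in s..t, Kker α (t - u) • f u := by
  have hf₀ : ContinuousOn f (Icc 0 s) := hf.mono (Icc_subset_Icc_right hst)
  have h₁ := intervalIntegrable_Kker_sub_smul hα₀ hα₁ hs hst hf₀
  have h₂ := intervalIntegrable_Kker_sub_smul hα₀ hα₁ hst le_rfl
    (hf.mono (Icc_subset_Icc_left hs))
  have h₃ := intervalIntegrable_Kker_sub_smul hα₀ hα₁ hs le_rfl hf₀
  rw [riemannLiouville, riemannLiouville, ← integral_add_adjacent_intervals h₁ h₂]
  simp only [sub_smul]
  rw [integral_sub h₁ h₃]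
  abel

lemma riemannLiouville_const [CompleteSpace E] (hα₀ : 0 < α) (hα₁ : α ≠ 1) (c : E) {t : ℝ}
    (ht : 0 ≤ t) :
    riemannLiouville α (fun _ => c) t = (t ^ α / (α * Gamma α)) • c := by
  rw [riemannLiouville, intervalIntegral.integral_smul_const,
    integral_Kker_sub hα₀ hα₁ ht le_rfl, sub_zero, sub_self, zero_rpow hα₀.ne', sub_zero]

lemma riemannLiouville_sub_const [CompleteSpace E] (hα₀ : 0 < α) (hα₁ : α ≠ 1) {f : ℝ → E}
    (c : E) {t : ℝ} (ht : 0 ≤ t) (hf : ContinuousOn f (Icc 0 t)) :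
    riemannLiouville α (fun u => f u - c) t =
      riemannLiouville α f t - (t ^ α / (α * Gamma α)) • c := by
  rw [← riemannLiouville_const hα₀ hα₁ c ht, riemannLiouville, riemannLiouville,
    riemannLiouville, ← integral_sub (intervalIntegrable_Kker_sub_smul hα₀ hα₁ ht le_rfl hf)
      (intervalIntegrable_Kker_sub_smul hα₀ hα₁ ht le_rfl continuousOn_const)]
  simp only [smul_sub]

lemma norm_integral_Kker_smul_le (hα₀ : 0 < α) (hα₁ : α ≠ 1) {g : ℝ → E} {D s t : ℝ}
    (hst : s ≤ t) (hg : ∀ u ∈ Ioc s t, ‖g u‖ ≤ D) :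
    ‖∫ u in s..t, Kker α (t - u) • g u‖ ≤ D * ((t - s) ^ α / (α * Gamma α)) := by
  calc _ ≤ ∫ u in s..t, D * Kker α (t - u) :=
        norm_integral_le_of_norm_le hst (ae_of_all _ fun u hu => ?_)
          ((intervalIntegrable_Kker_sub hα₀ hα₁ hst le_rfl).const_mul D)
    _ = _ := by
      rw [intervalIntegral.integral_const_mul, integral_Kker_sub hα₀ hα₁ hst le_rfl, sub_self,
        zero_rpow hα₀.ne', sub_zero]
  rw [norm_smul, norm_of_nonneg (Kker_nonneg hα₀ _), mul_comm]
  exact mul_le_mul_of_nonneg_right (hg u hu) (Kker_nonneg hα₀ _)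

lemma norm_integral_Kker_sub_smul_le (hα₀ : 0 < α) (hα₁ : α < 1) {g : ℝ → E} {M s t : ℝ}
    (hs : 0 ≤ s) (hst : s ≤ t) (hM : 0 ≤ M) (hg : ∀ u ∈ Ioc 0 s, ‖g u‖ ≤ M) :
    ‖∫ u in (0 : ℝ)..s, (Kker α (t - u) - Kker α (s - u)) • g u‖ ≤
      M * ((t - s) ^ α / (α * Gamma α)) := by
  have hKt := intervalIntegrable_Kker_sub hα₀ hα₁.ne hs hst
  have hKs := intervalIntegrable_Kker_sub hα₀ hα₁.ne hs le_rfl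
  calc _ ≤ ∫ u in (0 : ℝ)..s, M * (Kker α (s - u) - Kker α (t - u)) :=
        norm_integral_le_of_norm_le hs ?_ ((hKs.sub hKt).const_mul M)
    _ = M * ((s ^ α - t ^ α + (t - s) ^ α) / (α * Gamma α)) := by
      rw [intervalIntegral.integral_const_mul, integral_sub hKs hKt,
        integral_Kker_sub hα₀ hα₁.ne hs le_rfl, integral_Kker_sub hα₀ hα₁.ne hs hst, sub_self,
        sub_zero, sub_zero, zero_rpow hα₀.ne']
      ring
    _ ≤ M * ((t - s) ^ α / (α * Gamma α)) := by
      have := rpow_le_rpow hs hst hα₀.le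
      have := Gamma_pos_of_pos hα₀
      gcongr
      linarith
  filter_upwards [Measure.ae_ne volume s] with u hus hu
  have hsu : 0 < s - u := sub_pos.mpr (lt_of_le_of_ne hu.2 hus)
  have hK : Kker α (t - u) ≤ Kker α (s - u) :=
    Kker_antitoneOn hα₀ hα₁.le hsu (mem_Ioi.mpr (by linarith)) (by linarith)
  rw [norm_smul, Real.norm_eq_abs, abs_of_nonpos (sub_nonpos.mpr hK), neg_sub, mul_comm]
  exact mul_le_mul_of_nonneg_right (hg u hu) (sub_nonneg.mpr hK)

lemma norm_integral_Kker_sub_smul_le_of_norm_le_rpow (hα₀ : 0 < α) (hα₁ : α < 1) {γ C s t : ℝ}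
    (hγ : 1 < α + γ) {g : ℝ → E} (hs : 0 ≤ s) (hst : s ≤ t)
    (hg : ∀ u ∈ Ioc 0 s, ‖g u‖ ≤ C * (s - u) ^ γ) :
    ‖∫ u in (0 : ℝ)..s, (Kker α (t - u) - Kker α (s - u)) • g u‖ ≤
      C * (1 - α) * (t - s) / Gamma α * (s ^ (α + γ - 1) / (α + γ - 1)) := by
  have hint : IntervalIntegrable (fun u => (s - u) ^ (α + γ - 2)) volume 0 s := by
    simpa using (intervalIntegrable_rpow' (a := s - 0) (b := s - s)
      (by linarith : -1 < α + γ - 2)).comp_sub_left s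
  calc _ ≤ ∫ u in (0 : ℝ)..s, C * (1 - α) * (t - s) / Gamma α * (s - u) ^ (α + γ - 2) :=
        norm_integral_le_of_norm_le hs ?_ (hint.const_mul _)
    _ = _ := by
      rw [intervalIntegral.integral_const_mul, integral_comp_sub_left (fun v => v ^ (α + γ - 2)) s,
        integral_rpow (Or.inl (by linarith)), sub_self, sub_zero,
        show α + γ - 2 + 1 = α + γ - 1 by ring, zero_rpow (by linarith), sub_zero]
  filter_upwards [Measure.ae_ne volume s] with u hus hu
  have hsu : 0 < s - u := sub_pos.mpr (lt_of_le_of_ne hu.2 hus)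
  have hK := abs_Kker_add_sub_Kker_le hα₀ hα₁.le hsu (sub_nonneg.mpr hst)
  rw [show s - u + (t - s) = t - u by ring] at hK
  rw [norm_smul, Real.norm_eq_abs]
  calc _ ≤ (1 - α) * (t - s) * (s - u) ^ (α - 2) / Gamma α * (C * (s - u) ^ γ) :=
        mul_le_mul hK (hg u hu) (norm_nonneg _) ((abs_nonneg _).trans hK)
    _ = _ := by
      rw [show α + γ - 2 = α - 2 + γ by ring, rpow_add hsu]
      ring

theorem norm_riemannLiouville_sub_le (hα₀ : 0 < α) (hα₁ : α < 1) {f : ℝ → E} {M s t : ℝ}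
    (hs : 0 ≤ s) (hst : s ≤ t) (hf : ContinuousOn f (Icc 0 t))
    (hM : ∀ u ∈ Icc 0 t, ‖f u‖ ≤ M) :
    ‖riemannLiouville α f t - riemannLiouville α f s‖ ≤
      2 * M * ((t - s) ^ α / (α * Gamma α)) := by
  have hM₀ : 0 ≤ M := (norm_nonneg _).trans (hM t ⟨hs.trans hst, le_rfl⟩)
  rw [riemannLiouville_sub_riemannLiouville hα₀ hα₁.ne hs hst hf, two_mul, add_mul]
  exact (norm_add_le _ _).trans (add_le_add
    (norm_integral_Kker_sub_smul_le hα₀ hα₁ hs hst hM₀ fun u hu => hM u ⟨hu.1.le, hu.2.trans hst⟩)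
    (norm_integral_Kker_smul_le hα₀ hα₁.ne hst fun u hu => hM u ⟨hs.trans hu.1.le, hu.2⟩))

lemma norm_riemannLiouville_sub_le_of_norm_le_rpow (hα₀ : 0 < α) (hα₁ : α < 1) {γ C s t : ℝ}
    (hγ : 1 < α + γ) (hC : 0 ≤ C) {g : ℝ → E} (hs : 0 ≤ s) (hst : s ≤ t)
    (hg : ContinuousOn g (Icc 0 t)) (hg_past : ∀ u ∈ Ioc 0 s, ‖g u‖ ≤ C * (s - u) ^ γ)
    (hg_future : ∀ u ∈ Ioc s t, ‖g u‖ ≤ C * (u - s) ^ γ) :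
    ‖riemannLiouville α g t - riemannLiouville α g s‖ ≤
      C * ((1 - α) / (α + γ - 1) * s ^ (α + γ - 1) + 1 / α * (t - s) ^ (α + γ - 1)) /
        Gamma α * (t - s) := by
  have hts : 0 ≤ t - s := sub_nonneg.mpr hst
  have hpast := norm_integral_Kker_sub_smul_le_of_norm_le_rpow hα₀ hα₁ hγ hs hst hg_past
  have hrecent := norm_integral_Kker_smul_le hα₀ hα₁.ne hst (D := C * (t - s) ^ γ)
    fun u hu => (hg_future u hu).trans (by gcongr <;> linarith [hu.1, hu.2])
  have hpow : (t - s) ^ γ * (t - s) ^ α = (t - s) ^ (α + γ - 1) * (t - s) := by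
    rw [← rpow_add' hts (by linarith), add_comm γ, ← rpow_add_one' hts (by linarith),
      sub_add_cancel]
  rw [riemannLiouville_sub_riemannLiouville hα₀ hα₁.ne hs hst hg]
  calc _ ≤ _ := norm_add_le _ _
    _ ≤ _ := add_le_add hpast hrecent
    _ = C / Gamma α * (t - s) * ((1 - α) / (α + γ - 1) * s ^ (α + γ - 1)) +
          C / (α * Gamma α) * ((t - s) ^ γ * (t - s) ^ α) := by ring
    _ = _ := by rw [hpow]; ring

lemma riemannLiouville_sub_eq_sub_const_add [CompleteSpace E] (hα₀ : 0 < α) (hα₁ : α ≠ 1)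
    {f : ℝ → E} (c : E) {s t : ℝ} (hs : 0 ≤ s) (hst : s ≤ t) (hf : ContinuousOn f (Icc 0 t)) :
    riemannLiouville α f t - riemannLiouville α f s =
      (riemannLiouville α (fun u => f u - c) t - riemannLiouville α (fun u => f u - c) s) +
        ((t ^ α - s ^ α) / (α * Gamma α)) • c := by
  rw [riemannLiouville_sub_const hα₀ hα₁ c (hs.trans hst) hf,
    riemannLiouville_sub_const hα₀ hα₁ c hs (hf.mono (Icc_subset_Icc_right hst)), sub_div,
    sub_smul]
  abel

theorem norm_riemannLiouville_sub_le_of_holder [CompleteSpace E] (hα₀ : 0 < α) (hα₁ : α < 1)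
    {γ C M T : ℝ} (hγ : 1 < α + γ) (hC : 0 ≤ C) {f : ℝ → E} (hf : ContinuousOn f (Icc 0 T))
    (hM : ∀ u ∈ Icc 0 T, ‖f u‖ ≤ M)
    (hfC : ∀ u ∈ Icc 0 T, ∀ v ∈ Icc 0 T, u ≤ v → ‖f v - f u‖ ≤ C * (v - u) ^ γ)
    {s t : ℝ} (hs : 0 ≤ s) (hst : s ≤ t) (ht : t ≤ T) :
    ‖riemannLiouville α f t - riemannLiouville α f s‖ ≤
      M / (α * Gamma α) * (t ^ α - s ^ α) +
        C * ((1 - α) / (α + γ - 1) + 1 / α) * T ^ (α + γ - 1) / Gamma α * (t - s) := by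
  have hΓ := Gamma_pos_of_pos hα₀
  have hκ : 0 ≤ α + γ - 1 := by linarith
  have hsT : s ≤ T := hst.trans ht
  have hfT : ContinuousOn f (Icc 0 t) := hf.mono (Icc_subset_Icc_right ht)
  have hinc : 0 ≤ (t ^ α - s ^ α) / (α * Gamma α) :=
    div_nonneg (sub_nonneg.mpr (rpow_le_rpow hs hst hα₀.le)) (by positivity)
  have hvar := norm_riemannLiouville_sub_le_of_norm_le_rpow hα₀ hα₁ hγ hC
    (g := fun u => f u - f s) hs hst (hfT.sub continuousOn_const)
    (fun u hu => by
      rw [norm_sub_rev]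
      exact hfC u ⟨hu.1.le, hu.2.trans hsT⟩ s ⟨hs, hsT⟩ hu.2)
    (fun u hu => hfC s ⟨hs, hsT⟩ u ⟨hs.trans hu.1.le, hu.2.trans ht⟩ hu.1.le)
  have hconst : ‖((t ^ α - s ^ α) / (α * Gamma α)) • f s‖ ≤
      M / (α * Gamma α) * (t ^ α - s ^ α) := by
    rw [norm_smul, norm_of_nonneg hinc]
    exact (mul_le_mul_of_nonneg_left (hM s ⟨hs, hsT⟩) hinc).trans_eq (by ring)
  have hpow_le : (1 - α) / (α + γ - 1) * s ^ (α + γ - 1) + 1 / α * (t - s) ^ (α + γ - 1) ≤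
      ((1 - α) / (α + γ - 1) + 1 / α) * T ^ (α + γ - 1) := by
    have : 0 ≤ 1 - α := by linarith
    have := rpow_le_rpow hs hsT hκ
    have := rpow_le_rpow (sub_nonneg.mpr hst) (by linarith : t - s ≤ T) hκ
    rw [add_mul]
    gcongr
  have hts : 0 ≤ t - s := sub_nonneg.mpr hst
  rw [riemannLiouville_sub_eq_sub_const_add hα₀ hα₁.ne (f s) hs hst hfT, add_comm]
  calc _ ≤ _ := norm_add_le _ _
    _ ≤ _ := add_le_add hconst hvar
    _ ≤ M / (α * Gamma α) * (t ^ α - s ^ α) +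
          C * (((1 - α) / (α + γ - 1) + 1 / α) * T ^ (α + γ - 1)) / Gamma α * (t - s) := by
      gcongr
    _ = _ := by ring

end RiemannLiouville

theorem deterministic_volterra_boundedVariation_general (α T : ℝ)
    (hα : α ∈ Set.Ioo (1/2 : ℝ) 1)
    (d : ℕ) (x₀ : EuclideanSpace ℝ (Fin d))
    (b : EuclideanSpace ℝ (Fin d) → EuclideanSpace ℝ (Fin d))
    (hbLip : ∃ Lip : ℝ, ∀ y z, ‖b y - b z‖ ≤ Lip * ‖y - z‖)
    (x : ℝ → EuclideanSpace ℝ (Fin d)) (hx : ContinuousOn x (Set.Icc 0 T))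
    (heq : ∀ t ∈ Set.Icc (0:ℝ) T,
      x t = x₀ + ∫ s in (0:ℝ)..t, Kker α (t - s) • b (x s)) :
    BoundedVariationOn x (Set.Icc 0 T) := by
  obtain ⟨hα_half, hα₁⟩ := hα
  have hα₀ : 0 < α := by linarith
  obtain ⟨L, hL⟩ := hbLip
  have hb : LipschitzWith L.toNNReal b := LipschitzWith.of_dist_le_mul fun y z => by
    simpa only [dist_eq_norm] using (hL y z).trans (by gcongr; exact le_coe_toNNReal L)
  set f := fun u => b (x u)
  have hf : ContinuousOn f (Icc 0 T) := hb.continuous.comp_continuousOn hx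
  obtain ⟨M, hM⟩ := isCompact_Icc.exists_bound_of_continuousOn hf
  have hxf : ∀ s ∈ Icc 0 T, ∀ t ∈ Icc 0 T,
      x t - x s = riemannLiouville α f t - riemannLiouville α f s := fun s hs t ht => by
    rw [heq t ht, heq s hs, add_sub_add_left_eq_sub]
    rfl
  set C := L.toNNReal * (2 * M / (α * Gamma α))
  have hfC : ∀ u ∈ Icc 0 T, ∀ v ∈ Icc 0 T, u ≤ v → ‖f v - f u‖ ≤ C * (v - u) ^ α :=
    fun u hu v hv huv => calc
      ‖f v - f u‖ ≤ L.toNNReal * ‖x v - x u‖ := hb.norm_sub_le _ _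
      _ ≤ C * (v - u) ^ α := by
        rw [hxf u hu v hv, mul_assoc]
        gcongr
        exact (norm_riemannLiouville_sub_le hα₀ hα₁ hu.1 huv (hf.mono (Icc_subset_Icc_right hv.2))
          fun w hw => hM w ⟨hw.1, hw.2.trans hv.2⟩).trans_eq (by ring)
  refine boundedVariationOn_Icc_of_norm_sub_le (φ := fun t => M / (α * Gamma α) * t ^ α +
    C * ((1 - α) / (α + α - 1) + 1 / α) * T ^ (α + α - 1) / Gamma α * t) fun s hs t ht hst => ?_
  have hC : 0 ≤ C := by
    have := (norm_nonneg _).trans (hM s hs)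
    positivity
  rw [hxf s hs t ht]
  exact (norm_riemannLiouville_sub_le_of_holder hα₀ hα₁ (by linarith) hC hf hM hfC hs.1 hst
    ht.2).trans_eq (by ring)

/-- the solution of the deterministic Volterra equation has bounded
variation on `[0,T]` (Lemma 5.2). -/
theorem deterministic_volterra_boundedVariation (α T : ℝ)
    (hα : α ∈ Set.Ioo (1/2 : ℝ) 1) (hT : 0 < T)
    (d : ℕ) (x₀ : EuclideanSpace ℝ (Fin d))
    (b : EuclideanSpace ℝ (Fin d) → EuclideanSpace ℝ (Fin d))
    (hbLip : ∃ Lip : ℝ, ∀ y z, ‖b y - b z‖ ≤ Lip * ‖y - z‖)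
    (hbC1 : ContDiff ℝ 1 b)
    (hbDer : ∃ c > 0, ∀ y, ‖fderiv ℝ b y‖ ≤ c * (1 + ‖y‖ ^ c))
    (x : ℝ → EuclideanSpace ℝ (Fin d)) (hx : ContinuousOn x (Set.Icc 0 T))
    (heq : ∀ t ∈ Set.Icc (0:ℝ) T,
      x t = x₀ + ∫ s in (0:ℝ)..t, Kker α (t - s) • b (x s)) :
    BoundedVariationOn x (Set.Icc 0 T) :=
  deterministic_volterra_boundedVariation_general α T hα d x₀ b hbLip x hx heq
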